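/- Let s ∈ (1/2, 1), 1 < q < 2s, and p = q(2s - 1)/(2s - q), and let h : (R₀, ∞) → (0, ∞) be a decreasing function satisfying h(R)^p ≤ C·(h(R)/R^{2s} + h(R)^q/R^q) for all R > R₀, where C > 0. Then there exists a constant C' > 0 such that h(R) ≤ C'·R^{-2s/(p-1)} for all R > R₀. -/
import Mathlib

lemma stmt_9_aux (x a r : ℝ) (hx : 0 < x) (hr : 0 < r) (hle : x ^ r ≤ a) :
    x ≤ a ^ r⁻¹ := by
  have h0 : (0:ℝ) ≤ x ^ r := Real.rpow_nonneg hx.le r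
  have := Real.rpow_le_rpow h0 hle (inv_nonneg.2 hr.le)
  rwa [← Real.rpow_mul hx.le, mul_inv_cancel₀ hr.ne', Real.rpow_one] at this

theorem stmt_9 (s q p R₀ C : ℝ) (hs1 : 1 / 2 < s) (hs2 : s < 1) (hq1 : 1 < q) (hq2 : q < 2 * s)
    (hp : p = q * (2 * s - 1) / (2 * s - q))
    (hR₀ : 0 < R₀) (hC : 0 < C) (h : ℝ → ℝ)
    (hpos : ∀ R > R₀, 0 < h R) (hdec : AntitoneOn h (Set.Ioi R₀))
    (hineq : ∀ R > R₀, h R ^ p ≤ C * (h R / R ^ (2 * s) + h R ^ q / R ^ q)) :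
    ∃ C' > (0 : ℝ), ∀ R > R₀, h R ≤ C' * R ^ (-(2 * s) / (p - 1)) := by
  have hsq : 0 < 2 * s - q := by linarith
  have hq0 : 0 < q - 1 := by linarith
  have hspos : 0 < 2 * s := by linarith
  have hqpos : 0 < q := by linarith
  have hp1 : p - 1 = 2 * s * (q - 1) / (2 * s - q) := by
    rw [hp]; field_simp; ring
  have hpq : p - q = q * (q - 1) / (2 * s - q) := by
    rw [hp]; field_simp; ring
  have hp1pos : 0 < p - 1 := by rw [hp1]; exact div_pos (by nlinarith) hsq
  have hpqpos : 0 < p - q := by rw [hpq]; exact div_pos (by nlinarith) hsq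
  have hexp : -q / (p - q) = -(2 * s) / (p - 1) := by
    rw [hp1, hpq]
    field_simp
  have h2C : (0:ℝ) < 2 * C := by linarith
  refine ⟨(2*C) ^ (p-1)⁻¹ + (2*C) ^ (p-q)⁻¹, by positivity, ?_⟩
  intro R hR
  have hRpos : 0 < R := hR₀.trans hR
  have hx : 0 < h R := hpos R hR
  set x := h R with hxdef
  have h1 : x ^ p = x ^ (p-1) * x := by
    calc x ^ p = x ^ (p - 1 + 1) := by ring_nf
      _ = x ^ (p-1) * x ^ (1:ℝ) := Real.rpow_add hx _ _
      _ = x ^ (p-1) * x := by rw [Real.rpow_one]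
  have h2 : x ^ q = x ^ (q-1) * x := by
    calc x ^ q = x ^ (q - 1 + 1) := by ring_nf
      _ = x ^ (q-1) * x ^ (1:ℝ) := Real.rpow_add hx _ _
      _ = x ^ (q-1) * x := by rw [Real.rpow_one]
  have key : x ^ (p-1) ≤ C * R ^ (-(2*s)) + C * x ^ (q-1) * R ^ (-q) := by
    have h3 := hineq R hR
    rw [← hxdef, h1, h2] at h3
    have h5 : x ^ (p-1) * x ≤ (C * R ^ (-(2*s)) + C * x ^ (q-1) * R ^ (-q)) * x := by
      rw [Real.rpow_neg hRpos.le, Real.rpow_neg hRpos.le]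
      calc x^(p-1)*x ≤ C * (x / R^(2*s) + x^(q-1)*x/R^q) := h3
        _ = (C * (R^(2*s))⁻¹ + C * x^(q-1) * (R^q)⁻¹) * x := by
            rw [div_eq_mul_inv, div_eq_mul_inv]; ring
    exact le_of_mul_le_mul_right h5 hx
  have hRexp : 0 < R ^ (-(2*s)/(p-1)) := Real.rpow_pos_of_pos hRpos _
  rcases le_total (C * x ^ (q-1) * R ^ (-q)) (C * R ^ (-(2*s))) with hcase | hcase
  · have h4 : x ^ (p-1) ≤ (2*C) * R ^ (-(2*s)) := by linarith
    have h5 := stmt_9_aux x _ _ hx hp1pos h4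
    have h6 : ((2*C) * R ^ (-(2*s))) ^ (p-1)⁻¹
        = (2*C) ^ (p-1)⁻¹ * R ^ (-(2*s)/(p-1)) := by
      rw [Real.mul_rpow h2C.le (Real.rpow_nonneg hRpos.le _),
        ← Real.rpow_mul hRpos.le, ← div_eq_mul_inv]
    rw [h6] at h5
    have h7 : 0 < (2*C) ^ (p-q)⁻¹ * R ^ (-(2*s)/(p-1)) := by positivity
    nlinarith
  · have h4 : x ^ (p-1) ≤ (2*C) * x ^ (q-1) * R ^ (-q) := by linarith
    have h8 : x ^ (p-1) = x ^ (p-q) * x ^ (q-1) := by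
      rw [← Real.rpow_add hx]; ring_nf
    rw [h8] at h4
    have hxq : 0 < x ^ (q-1) := Real.rpow_pos_of_pos hx _
    have h9 : x ^ (p-q) ≤ (2*C) * R ^ (-q) := by
      have h10 : x ^ (p-q) * x ^ (q-1) ≤ ((2*C) * R^(-q)) * x^(q-1) :=
        h4.trans_eq (by ring)
      exact le_of_mul_le_mul_right h10 hxq
    have h5 := stmt_9_aux x _ _ hx hpqpos h9
    have h6 : ((2*C) * R ^ (-q)) ^ (p-q)⁻¹
        = (2*C) ^ (p-q)⁻¹ * R ^ (-(2*s)/(p-1)) := by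
      rw [Real.mul_rpow h2C.le (Real.rpow_nonneg hRpos.le _),
        ← Real.rpow_mul hRpos.le, ← div_eq_mul_inv, hexp]
    rw [h6] at h5
    have h7 : 0 < (2*C) ^ (p-1)⁻¹ * R ^ (-(2*s)/(p-1)) := by positivity
    nlinarith
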